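/- arXiv:1706.08992 — 3 statements merged into one kernel-verified Lean document; each statement's English description precedes it below -/
import Mathlib

section
/- Let $C = (C_{\bullet,\bullet}, \bar{b}, \bar{B}, b, B)$ be a cylindrical complex, i.e., a parachain bicomplex such that the operators $\bar{T} = 1 - (\bar{b}\bar{B} + \bar{B}\bar{b})$ and $T = 1 - (bB + Bb)$ satisfy $\bar{T}T = 1$. Define $\mathrm{Tot}_m(C) = \bigoplus_{p+q=m} C_{p,q}$, $b^\dagger = \bar{b} + (-1)^p b$, and $B^\dagger = \bar{B} + (-1)^p \bar{T} B$ on $C_{p,q}$. Then $(\mathrm{Tot}_\bullet(C), b^\dagger, B^\dagger)$ is a mixed complex: $(b^\dagger)^2 = (B^\dagger)^2 = b^\dagger B^\dagger + B^\dagger b^\dagger = 0$. -/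
/-!
Statement 10: For a cylindrical complex `C = (C_{••}, b̄, B̄, b, B)` — a parachain
bicomplex whose curvature operators `T̄ = 1 - (b̄B̄ + B̄b̄)` and `T = 1 - (bB + Bb)`
satisfy `T̄ T = 1` — the total complex `Tot_m(C) = ⊕_{p+q=m} C_{p,q}` with
`b† = b̄ + (-1)^p b` and `B† = B̄ + (-1)^p T̄ B` is a mixed complex:
`(b†)² = (B†)² = b†B† + B†b† = 0`.  (Realized on the total product module.)
-/

noncomputable section

variable (k : Type) [CommRing k]

/-- Transport along equalities of bidegrees. -/
def gc2 (C : ℤ → ℤ → Type) [∀ p q, AddCommGroup (C p q)] [∀ p q, Module k (C p q)]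
    {a a' b b' : ℤ} (h : a = a') (h' : b = b') : C a b →ₗ[k] C a' b' := by
  subst h; subst h'; exact LinearMap.id

/-- The total module `∀ p q, C p q`. -/
abbrev Tot2 (C : ℤ → ℤ → Type) := ∀ p : ℤ × ℤ, C p.1 p.2

variable (C : ℤ → ℤ → Type) [∀ p q, AddCommGroup (C p q)] [∀ p q, Module k (C p q)]
variable (bbar : ∀ p q, C p q →ₗ[k] C (p - 1) q) (Bbar : ∀ p q, C p q →ₗ[k] C (p + 1) q)
variable (b : ∀ p q, C p q →ₗ[k] C p (q - 1)) (B : ∀ p q, C p q →ₗ[k] C p (q + 1))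

/-- The horizontal curvature `T̄ = 1 - (b̄B̄ + B̄b̄)`. -/
def Tbar (p q : ℤ) : C p q →ₗ[k] C p q :=
  LinearMap.id
    - (gc2 k C (show p + 1 - 1 = p by ring) rfl ∘ₗ bbar (p + 1) q ∘ₗ Bbar p q
        + gc2 k C (show p - 1 + 1 = p by ring) rfl ∘ₗ Bbar (p - 1) q ∘ₗ bbar p q)

/-- The vertical curvature `T = 1 - (bB + Bb)`. -/
def Tvert (p q : ℤ) : C p q →ₗ[k] C p q :=
  LinearMap.id
    - (gc2 k C rfl (show q + 1 - 1 = q by ring) ∘ₗ b p (q + 1) ∘ₗ B p q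
        + gc2 k C rfl (show q - 1 + 1 = q by ring) ∘ₗ B p (q - 1) ∘ₗ b p q)

/-- The total differential `b† = b̄ + (-1)^p b`. -/
def bDagger : Tot2 C →ₗ[k] Tot2 C where
  toFun f p :=
    gc2 k C (show p.1 + 1 - 1 = p.1 by ring) rfl (bbar (p.1 + 1) p.2 (f (p.1 + 1, p.2)))
    + (((-1 : kˣ) ^ p.1 : kˣ) : k) •
        gc2 k C rfl (show p.2 + 1 - 1 = p.2 by ring) (b p.1 (p.2 + 1) (f (p.1, p.2 + 1)))
  map_add' f g := by funext p; simp only [Pi.add_apply, map_add]; module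
  map_smul' c f := by funext p; simp only [Pi.smul_apply, map_smul, RingHom.id_apply]; module

/-- The total `B`-differential `B† = B̄ + (-1)^p T̄ B`. -/
def BDagger : Tot2 C →ₗ[k] Tot2 C where
  toFun f p :=
    gc2 k C (show p.1 - 1 + 1 = p.1 by ring) rfl (Bbar (p.1 - 1) p.2 (f (p.1 - 1, p.2)))
    + (((-1 : kˣ) ^ p.1 : kˣ) : k) •
        Tbar k C bbar Bbar p.1 p.2
          (gc2 k C rfl (show p.2 - 1 + 1 = p.2 by ring) (B p.1 (p.2 - 1) (f (p.1, p.2 - 1))))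
  map_add' f g := by funext p; simp only [Pi.add_apply, map_add]; module
  map_smul' c f := by funext p; simp only [Pi.smul_apply, map_smul, RingHom.id_apply]; module

section Helpers

lemma gc2_self {a c : ℤ} (h : a = a) (h' : c = c) (x : C a c) : gc2 k C h h' x = x := rfl

lemma gc2_gc2 {a a' a'' c c' c'' : ℤ} (h1 : a = a') (h2 : a' = a'') (h1' : c = c') (h2' : c' = c'')
    (x : C a c) : gc2 k C h2 h2' (gc2 k C h1 h1' x) = gc2 k C (h1.trans h2) (h1'.trans h2') x := by
  subst h1 h2 h1' h2'; rfl

lemma b_gc2 {a a' c c' : ℤ} (h : a = a') (h' : c = c') (x : C a c) :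
    b a' c' (gc2 k C h h' x) = gc2 k C h (by rw [h']) (b a c x) := by subst h h'; rfl

lemma B_gc2 {a a' c c' : ℤ} (h : a = a') (h' : c = c') (x : C a c) :
    B a' c' (gc2 k C h h' x) = gc2 k C h (by rw [h']) (B a c x) := by subst h h'; rfl

lemma bbar_gc2 {a a' c c' : ℤ} (h : a = a') (h' : c = c') (x : C a c) :
    bbar a' c' (gc2 k C h h' x) = gc2 k C (by rw [h]) h' (bbar a c x) := by subst h h'; rfl

lemma Bbar_gc2 {a a' c c' : ℤ} (h : a = a') (h' : c = c') (x : C a c) :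
    Bbar a' c' (gc2 k C h h' x) = gc2 k C (by rw [h]) h' (Bbar a c x) := by subst h h'; rfl

lemma Tbar_gc2 {a a' c c' : ℤ} (h : a = a') (h' : c = c') (x : C a c) :
    Tbar k C bbar Bbar a' c' (gc2 k C h h' x) = gc2 k C h h' (Tbar k C bbar Bbar a c x) := by
  subst h h'; rfl

lemma eps_add_one (n : ℤ) : (((-1 : kˣ) ^ (n + 1) : kˣ) : k) = -(((-1 : kˣ) ^ n : kˣ) : k) := by
  rw [zpow_add_one]; push_cast; ring

lemma eps_sub_one (n : ℤ) : (((-1 : kˣ) ^ (n - 1) : kˣ) : k) = -(((-1 : kˣ) ^ n : kˣ) : k) := by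
  rw [zpow_sub_one]; push_cast; simp

lemma eps_mul_eps (n : ℤ) : (((-1 : kˣ) ^ n : kˣ) : k) * (((-1 : kˣ) ^ n : kˣ) : k) = 1 := by
  rw [← Units.val_mul, ← mul_zpow]; norm_num


lemma f_pt (f : Tot2 C) {a a' c c' : ℤ} (h : a' = a) (h' : c' = c) :
    f (a, c) = gc2 k C h h' (f (a', c')) := by subst h h'; rfl

end Helpers

/-- For a cylindrical complex, `(Tot(C), b†, B†)` is a mixed
complex. -/
theorem cylindrical_total_is_mixed_complex
    -- each row and column is a parachain complex
    (hbbar : ∀ p q (x : C p q), bbar (p - 1) q (bbar p q x) = 0)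
    (hBbar : ∀ p q (x : C p q), Bbar (p + 1) q (Bbar p q x) = 0)
    (hb : ∀ p q (x : C p q), b p (q - 1) (b p q x) = 0)
    (hB : ∀ p q (x : C p q), B p (q + 1) (B p q x) = 0)
    -- the horizontal differentials commute with the vertical ones
    (h1 : ∀ p q (x : C p q), bbar p (q - 1) (b p q x) = b (p - 1) q (bbar p q x))
    (h2 : ∀ p q (x : C p q), bbar p (q + 1) (B p q x) = B (p - 1) q (bbar p q x))
    (h3 : ∀ p q (x : C p q), Bbar p (q - 1) (b p q x) = b (p + 1) q (Bbar p q x))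
    (h4 : ∀ p q (x : C p q), Bbar p (q + 1) (B p q x) = B (p + 1) q (Bbar p q x))
    -- the cylindrical condition `T̄ T = 1`
    (hcyl : ∀ p q, (Tbar k C bbar Bbar p q) ∘ₗ (Tvert k C b B p q) = LinearMap.id) :
    ((bDagger k C bbar b) ∘ₗ (bDagger k C bbar b) = 0)
    ∧ ((BDagger k C bbar Bbar B) ∘ₗ (BDagger k C bbar Bbar B) = 0)
    ∧ ((bDagger k C bbar b) ∘ₗ (BDagger k C bbar Bbar B)
        + (BDagger k C bbar Bbar B) ∘ₗ (bDagger k C bbar b) = 0) := by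
  have hTB : ∀ p q (x : C p q), Tbar k C bbar Bbar p (q + 1) (B p q x)
      = B p q (Tbar k C bbar Bbar p q x) := by
    intro p q x
    simp only [Tbar, LinearMap.sub_apply, LinearMap.add_apply, LinearMap.comp_apply,
      LinearMap.id_apply, map_sub, map_add, B_gc2, h2, h4]
  have hTb : ∀ p q (x : C p q), Tbar k C bbar Bbar p (q - 1) (b p q x)
      = b p q (Tbar k C bbar Bbar p q x) := by
    intro p q x
    simp only [Tbar, LinearMap.sub_apply, LinearMap.add_apply, LinearMap.comp_apply,
      LinearMap.id_apply, map_sub, map_add, b_gc2, h1, h3]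
  have hTBbar : ∀ p q (x : C p q), Bbar p q (Tbar k C bbar Bbar p q x)
      = Tbar k C bbar Bbar (p + 1) q (Bbar p q x) := by
    intro p q x
    simp only [Tbar, LinearMap.sub_apply, LinearMap.add_apply, LinearMap.comp_apply,
      LinearMap.id_apply, map_sub, map_add, Bbar_gc2, hBbar, map_zero, add_zero, zero_add]
  have hTbbar : ∀ p q (x : C p q), bbar p q (Tbar k C bbar Bbar p q x)
      = Tbar k C bbar Bbar (p - 1) q (bbar p q x) := by
    intro p q x
    simp only [Tbar, LinearMap.sub_apply, LinearMap.add_apply, LinearMap.comp_apply,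
      LinearMap.id_apply, map_sub, map_add, bbar_gc2, hbbar, map_zero, add_zero, zero_add]
  have hTexp : ∀ p q (x : C p q), Tbar k C bbar Bbar p q x
      = x - (gc2 k C (show p + 1 - 1 = p by ring) rfl (bbar (p + 1) q (Bbar p q x))
          + gc2 k C (show p - 1 + 1 = p by ring) rfl (Bbar (p - 1) q (bbar p q x))) := by
    intro p q x
    simp only [Tbar, LinearMap.sub_apply, LinearMap.add_apply, LinearMap.comp_apply,
      LinearMap.id_apply]
  have hcyl' : ∀ p q (x : C p q),
      gc2 k C (show p + 1 - 1 = p by ring) rfl (bbar (p + 1) q (Bbar p q x))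
      + gc2 k C (show p - 1 + 1 = p by ring) rfl (Bbar (p - 1) q (bbar p q x))
      + gc2 k C rfl (show q + 1 - 1 = q by ring)
          (b p (q + 1) (B p q (Tbar k C bbar Bbar p q x)))
      + gc2 k C rfl (show q - 1 + 1 = q by ring)
          (B p (q - 1) (b p q (Tbar k C bbar Bbar p q x))) = 0 := by
    intro p q x
    have h0 := LinearMap.congr_fun (hcyl p q) x
    simp only [LinearMap.comp_apply, LinearMap.id_apply, Tvert, LinearMap.sub_apply,
      LinearMap.add_apply, map_sub, map_add, Tbar_gc2, hTb, hTB] at h0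
    linear_combination (norm := module) hTexp p q x - h0
  refine ⟨?_, ?_, ?_⟩
  · apply LinearMap.ext; intro f; funext pq; obtain ⟨p, q⟩ := pq
    simp only [LinearMap.comp_apply, LinearMap.zero_apply, bDagger, LinearMap.coe_mk,
      AddHom.coe_mk, map_add, map_smul, b_gc2, bbar_gc2, gc2_gc2, Pi.zero_apply]
    simp only [hbbar, hb, h1, map_zero, smul_zero, add_zero, zero_add, eps_add_one, neg_smul,
      smul_smul, eps_mul_eps]
    exact neg_add_cancel _
  · apply LinearMap.ext; intro f; funext pq; obtain ⟨p, q⟩ := pq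
    simp only [LinearMap.comp_apply, LinearMap.zero_apply, BDagger, LinearMap.coe_mk,
      AddHom.coe_mk, map_add, map_smul, map_neg, Pi.zero_apply, hTB, hTBbar, Tbar_gc2, B_gc2,
      Bbar_gc2, gc2_gc2, h4, hBbar, hB, map_zero, smul_zero, add_zero, zero_add,
      eps_sub_one, neg_smul, smul_smul, eps_mul_eps, one_smul, neg_add_cancel]
  · apply LinearMap.ext; intro f; funext pq; obtain ⟨p, q⟩ := pq
    simp only [LinearMap.add_apply, LinearMap.comp_apply, LinearMap.zero_apply, Pi.add_apply,
      bDagger, BDagger, LinearMap.coe_mk, AddHom.coe_mk, map_add, map_smul, map_neg,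
      Pi.zero_apply, hTB, hTb, hTBbar, hTbbar, Tbar_gc2, B_gc2, b_gc2, Bbar_gc2, bbar_gc2,
      gc2_gc2, h1, h2, h3, h4, hbbar, hBbar, hb, hB, map_zero, smul_zero, add_zero, zero_add,
      eps_add_one, eps_sub_one, neg_smul, smul_smul, eps_mul_eps, one_smul, neg_add_cancel]
    rw [f_pt k C f (show p = p + 1 - 1 by ring) (Eq.refl q),
      f_pt k C f (show p = p - 1 + 1 by ring) (Eq.refl q),
      f_pt k C f (Eq.refl p) (show q = q + 1 - 1 by ring),
      f_pt k C f (Eq.refl p) (show q = q - 1 + 1 by ring)]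
    simp only [hTB, hTb, hTBbar, hTbbar, Tbar_gc2, B_gc2, b_gc2, Bbar_gc2, bbar_gc2, gc2_gc2,
      smul_add, smul_smul, eps_mul_eps, one_smul]
    linear_combination (norm := module) hcyl' p q (f (p, q))
end
end

section
/- Let $\Gamma$ be a group acting on a unital $k$-algebra $\mathcal{A}$, $\phi \in \Gamma$, and $\Gamma_\phi$ the centralizer of $\phi$. Then the map $\mu_\phi: C_m(\Gamma_\phi) \otimes_{\Gamma_\phi} \mathcal{A}^{\otimes(m+1)} \to C_m(\mathcal{A}_\Gamma)_{[\phi]}$ defined by $\mu_\phi((\psi_0,\ldots,\psi_m) \otimes_{\Gamma_\phi} (a^0 \otimes \cdots \otimes a^m)) = [(\psi_m^{-1}\phi)\cdot a^0] u_{\phi\psi_m^{-1}\psi_0} \otimes (\psi_0^{-1}\cdot a^1) u_{\psi_0^{-1}\psi_1} \otimes \cdots \otimes (\psi_{m-1}^{-1}\cdot a^m) u_{\psi_{m-1}^{-1}\psi_m}$ is well-defined (i.e., independent of the choice of representative for the $\Gamma_\phi$-orbit) and its image lies in $C_m(\mathcal{A}_\Gamma)_{[\phi]}$. -/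
open scoped TensorProduct

/-!
Statement 13: For a group `Γ` acting on a unital `k`-algebra `A`, `φ ∈ Γ` with
centralizer `Γ_φ`, the map
`μ_φ((ψ₀,…,ψ_m) ⊗_{Γ_φ} (a⁰ ⊗ ⋯ ⊗ aᵐ))
  = [(ψ_m⁻¹φ)·a⁰]u_{φψ_m⁻¹ψ₀} ⊗ (ψ₀⁻¹·a¹)u_{ψ₀⁻¹ψ₁} ⊗ ⋯ ⊗ (ψ_{m-1}⁻¹·aᵐ)u_{ψ_{m-1}⁻¹ψ_m}`
is well defined (its value on generators only depends on the `Γ_φ`-orbit) and takes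
values in `C_m(A_Γ)_{[φ]}`.
-/

noncomputable section

variable (k A Γ : Type) [CommRing k] [Ring A] [Algebra k A] [Group Γ]
variable (ρ : Γ →* (A ≃ₐ[k] A))

/-- The crossed product `A_Γ` as a `k`-module. -/
abbrev AG : Type := Γ →₀ A

/-- `C_m(A_Γ) = A_Γ^{⊗(m+1)}`. -/
abbrev CAG (m : ℕ) : Type := ⨂[k] _i : Fin (m + 1), AG A Γ

/-- The component of `C_m(A_Γ)` associated with the conjugacy class `c`. -/
def conjComp (m : ℕ) (c : ConjClasses Γ) : Submodule k (CAG k A Γ m) :=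
  Submodule.span k
    {x | ∃ (φs : Fin (m + 1) → Γ) (as : Fin (m + 1) → A),
      ConjClasses.mk ((List.ofFn φs).prod) = c ∧
      x = PiTensorProduct.tprod k (fun i => Finsupp.single (φs i) (as i))}

variable {Γ}

/-- The value of `μ_φ` on the generator `(ψ₀,…,ψ_m) ⊗ (a⁰ ⊗ ⋯ ⊗ aᵐ)`:
the `i`-th tensor factor is `(e_i · a^i) u_{g_i}` with
`g_i = (φ if i = 0 else 1)·ψ_{i-1}⁻¹ψ_i` and `e_i = ψ_{i-1}⁻¹·(φ if i = 0 else 1)`,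
indices taken cyclically (so `ψ_{0-1} = ψ_m`). -/
def muVal (φ : Γ) (m : ℕ) (ψs : Fin (m + 1) → Γ) (as : Fin (m + 1) → A) : CAG k A Γ m :=
  PiTensorProduct.tprod k fun i =>
    Finsupp.single ((if i = 0 then φ else 1) * (ψs (i - 1))⁻¹ * ψs i)
      (ρ ((ψs (i - 1))⁻¹ * (if i = 0 then φ else 1)) (as i))

lemma fin_succ_sub_one {m : ℕ} (i : Fin m) : i.succ - 1 = i.castSucc := by
  have hm : 0 < m := i.pos
  apply Fin.ext
  rw [Fin.sub_def]
  have h1 : ((1 : Fin (m + 1)) : ℕ) = 1 := by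
    simp [Fin.val_one']
    omega
  simp only [h1, Fin.val_succ, Fin.coe_castSucc]
  have : m + 1 - 1 + (i + 1) = i + (m + 1) := by omega
  rw [this, Nat.add_mod_right, Nat.mod_eq_of_lt (by omega)]

lemma fin_zero_sub_one {m : ℕ} : (0 : Fin (m + 1)) - 1 = Fin.last m := by
  apply Fin.ext
  rw [Fin.sub_def]
  rcases m with _ | m
  · decide
  · have h1 : ((1 : Fin (m + 2)) : ℕ) = 1 := by simp [Fin.val_one']
    simp only [h1, Fin.val_zero, Fin.val_last, Nat.add_zero]
    rw [Nat.mod_eq_of_lt (by omega)]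
    omega

lemma telescopeL {Γ : Type} [Group Γ] :
    ∀ (n : ℕ) (ψ : Fin (n + 1) → Γ),
      (List.ofFn fun i : Fin n => (ψ i.castSucc)⁻¹ * ψ i.succ).prod
        = (ψ 0)⁻¹ * ψ (Fin.last n) := by
  intro n
  induction n with
  | zero => intro ψ; simp [Fin.last]
  | succ n ih =>
    intro ψ
    rw [List.ofFn_succ', List.prod_concat]
    have h : (List.ofFn fun i : Fin n =>
        (ψ (i.castSucc.castSucc))⁻¹ * ψ (i.castSucc.succ)).prod
        = (ψ 0)⁻¹ * ψ ((Fin.last n).castSucc) := by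
      have := ih (fun j => ψ j.castSucc)
      simp only [Fin.succ_castSucc]
      exact this
    rw [h, Fin.succ_last]
    group

/-- `μ_φ` is well defined on the tensor product over the centralizer
`Γ_φ` — its value on generators is invariant under the simultaneous diagonal action
of `Γ_φ` — and its image lies in the conjugacy-class component `C_m(A_Γ)_{[φ]}`. -/
theorem muphi_well_defined (φ : Γ) (m : ℕ)
    (ψs : Fin (m + 1) → Subgroup.centralizer ({φ} : Set Γ)) (as : Fin (m + 1) → A) :
    (∀ χ : Subgroup.centralizer ({φ} : Set Γ),
      muVal k A ρ φ m (fun i => ((χ * ψs i : Subgroup.centralizer ({φ} : Set Γ)) : Γ))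
        (fun i => ρ (χ : Γ) (as i))
      = muVal k A ρ φ m (fun i => ((ψs i : Γ))) as)
    ∧ muVal k A ρ φ m (fun i => ((ψs i : Γ))) as ∈ conjComp k A Γ m (ConjClasses.mk φ) := by
  constructor
  · intro χ
    have hc : φ * (χ : Γ) = (χ : Γ) * φ :=
      Subgroup.mem_centralizer_iff.mp χ.2 φ (Set.mem_singleton φ)
    unfold muVal
    congr 1
    funext i
    simp only [Subgroup.coe_mul, mul_inv_rev]
    congr 1
    · -- group component
      group
    · -- algebra component
      rw [← AlgEquiv.mul_apply, ← map_mul]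
      congr 1
      by_cases h : i = 0
      · simp only [h, if_pos]
        congr 1
        rw [mul_assoc, hc, mul_assoc, inv_mul_cancel_left]
      · simp [h]
  · apply Submodule.subset_span
    refine ⟨_, _, ?_, rfl⟩
    have hprod :
        (List.ofFn (fun i : Fin (m + 1) =>
          (if i = 0 then φ else 1) * ((ψs (i - 1) : Γ))⁻¹ * (ψs i : Γ))).prod = φ := by
      rw [List.ofFn_succ, List.prod_cons]
      have h0 : (if (0 : Fin (m + 1)) = 0 then φ else 1) * ((ψs (0 - 1) : Γ))⁻¹ * (ψs 0 : Γ)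
          = φ * ((ψs (Fin.last m) : Γ))⁻¹ * (ψs 0 : Γ) := by
        rw [if_pos rfl, fin_zero_sub_one]
      have hs : (fun i : Fin m =>
          (if i.succ = 0 then φ else 1) * ((ψs (i.succ - 1) : Γ))⁻¹ * (ψs i.succ : Γ))
          = fun i : Fin m => (((fun j : Fin (m + 1) => (ψs j : Γ)) i.castSucc)⁻¹
              * (fun j : Fin (m + 1) => (ψs j : Γ)) i.succ) := by
        funext i
        rw [if_neg (Fin.succ_ne_zero i), one_mul, fin_succ_sub_one]
      rw [h0, hs, telescopeL m (fun j => (ψs j : Γ))]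
      group
    rw [hprod]
end
end

section
/- Let $(C_\bullet, d, S)$ be a para-$S$-module, i.e., $d: C_\bullet \to C_{\bullet-1}$ and $S: C_\bullet \to C_{\bullet-2}$ are commuting $k$-module maps with $d^2 = (1-T)S$ for some $k$-module map $T$ commuting with both $d$ and $S$. If $(C_\bullet, b, B)$ is a parachain complex with $T = 1 - (bB+Bb)$ and $C^\natural$ its cyclic pseudo-complex ($C^\natural_m = C_m \oplus C_{m-2} \oplus \cdots$, differential $b + BS$ with $S$ the canonical shift), then $(b+BS)^2 = (1 - T)S$ on $C^\natural$, so $C^\natural$ is a para-$S$-module. -/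
/-!
Statement 17: For a parachain complex `(C, b, B)` (so `b² = B² = 0`, with
`T = 1 - (bB + Bb)` invertible), the cyclic pseudo-complex `C^♮` (components `(n, j)`:
the copy of `C n` appearing as the `j`-th summand of `C^♮_{n+2j}`) with differential
`b + B S` satisfies `(b + BS)² = (1 - T) S`, i.e. `C^♮` is a para-`S`-module.
-/

noncomputable section

variable (k : Type) [CommRing k]

/-- Transport along an equality of degrees, as a `k`-linear map. -/
def gc (C : ℤ → Type) [∀ n, AddCommGroup (C n)] [∀ n, Module k (C n)]
    {a b : ℤ} (h : a = b) : C a →ₗ[k] C b := by subst h; exact LinearMap.id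

/-- The total module of the cyclic pseudo-complex. -/
abbrev TotNat (C : ℤ → Type) := ∀ p : ℤ × ℕ, C p.1

/-- The operator induced by `b` on the cyclic pseudo-complex. -/
def bNat (C : ℤ → Type) [∀ n, AddCommGroup (C n)] [∀ n, Module k (C n)]
    (b : ∀ n : ℤ, C n →ₗ[k] C (n - 1)) : TotNat C →ₗ[k] TotNat C where
  toFun f p := gc k C (show p.1 + 1 - 1 = p.1 by ring) (b (p.1 + 1) (f (p.1 + 1, p.2)))
  map_add' f g := by funext p; simp [Pi.add_apply]
  map_smul' c f := by funext p; simp [Pi.smul_apply]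

/-- The operator induced by `B` on the cyclic pseudo-complex. -/
def BNat (C : ℤ → Type) [∀ n, AddCommGroup (C n)] [∀ n, Module k (C n)]
    (B : ∀ n : ℤ, C n →ₗ[k] C (n + 1)) : TotNat C →ₗ[k] TotNat C where
  toFun f p := gc k C (show p.1 - 1 + 1 = p.1 by ring) (B (p.1 - 1) (f (p.1 - 1, p.2)))
  map_add' f g := by funext p; simp [Pi.add_apply]
  map_smul' c f := by funext p; simp [Pi.smul_apply]

/-- The operator `T` acting summand-wise on the cyclic pseudo-complex. -/
def TNat (C : ℤ → Type) [∀ n, AddCommGroup (C n)] [∀ n, Module k (C n)]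
    (T : ∀ n : ℤ, C n →ₗ[k] C n) : TotNat C →ₗ[k] TotNat C where
  toFun f p := T p.1 (f p)
  map_add' f g := by funext p; simp [Pi.add_apply]
  map_smul' c f := by funext p; simp [Pi.smul_apply]

/-- The periodicity operator `S` (shift of the summand index, i.e. the canonical
projection factoring out the top summand). -/
def SNat (C : ℤ → Type) [∀ n, AddCommGroup (C n)] [∀ n, Module k (C n)] :
    TotNat C →ₗ[k] TotNat C where
  toFun f p := f (p.1, p.2 + 1)
  map_add' f g := rfl
  map_smul' c f := rfl


section Aux
variable {k : Type} [CommRing k]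
variable {C : ℤ → Type} [∀ n, AddCommGroup (C n)] [∀ n, Module k (C n)]

lemma gc_gc {a b c : ℤ} (h : a = b) (h' : b = c) (x : C a) :
    gc k C h' (gc k C h x) = gc k C (h.trans h') x := by subst h; subst h'; rfl

lemma gc_f (f : TotNat C) {m m' : ℤ} (h : m = m') (j : ℕ) :
    f (m', j) = gc k C h (f (m, j)) := by subst h; rfl

lemma gc_zero {a b : ℤ} (h : a = b) : gc k C h (0 : C a) = 0 := by subst h; rfl

lemma gc_sub {a b : ℤ} (h : a = b) (x y : C a) :
    gc k C h (x - y) = gc k C h x - gc k C h y := by subst h; rfl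

lemma gc_add {a b : ℤ} (h : a = b) (x y : C a) :
    gc k C h (x + y) = gc k C h x + gc k C h y := by subst h; rfl

lemma b_gc (b : ∀ n : ℤ, C n →ₗ[k] C (n - 1)) {a a' : ℤ} (h : a = a') (x : C a) :
    b a' (gc k C h x) = gc k C (by rw [h]) (b a x) := by subst h; rfl

lemma B_gc (B : ∀ n : ℤ, C n →ₗ[k] C (n + 1)) {a a' : ℤ} (h : a = a') (x : C a) :
    B a' (gc k C h x) = gc k C (by rw [h]) (B a x) := by subst h; rfl

end Aux

/-- For a parachain complex `(C, b, B)` with `T = 1 - (bB + Bb)`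
invertible, one has `(b + BS)² = (1 - T) S` on the cyclic pseudo-complex `C^♮`,
so `C^♮` is a para-`S`-module. -/
theorem cyclic_pseudo_complex_is_para_S_module
    (C : ℤ → Type) [∀ n, AddCommGroup (C n)] [∀ n, Module k (C n)]
    (b : ∀ n : ℤ, C n →ₗ[k] C (n - 1)) (B : ∀ n : ℤ, C n →ₗ[k] C (n + 1))
    (T : ∀ n : ℤ, C n →ₗ[k] C n)
    (hb : ∀ (n : ℤ) (x : C n), b (n - 1) (b n x) = 0)
    (hB : ∀ (n : ℤ) (x : C n), B (n + 1) (B n x) = 0)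
    (hT : ∀ (n : ℤ) (x : C n),
      T n x = x - (gc k C (show n + 1 - 1 = n by ring) (b (n + 1) (B n x))
        + gc k C (show n - 1 + 1 = n by ring) (B (n - 1) (b n x))))
    (hTinv : ∀ n, Function.Bijective (T n)) :
    (bNat k C b + BNat k C B ∘ₗ SNat k C) ∘ₗ (bNat k C b + BNat k C B ∘ₗ SNat k C)
      = SNat k C - TNat k C T ∘ₗ SNat k C := by
  apply LinearMap.ext; intro f
  funext p
  obtain ⟨n, j⟩ := p
  simp only [LinearMap.comp_apply, LinearMap.add_apply, LinearMap.sub_apply,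
    bNat, BNat, SNat, TNat, LinearMap.coe_mk, AddHom.coe_mk, Pi.add_apply, Pi.sub_apply,
    map_add, b_gc, B_gc, gc_gc, hb, gc_zero, hB, hT, gc_sub, gc_add]
  rw [gc_f (k := k) f (show (n : ℤ) = n - 1 + 1 by ring) (j + 1),
    gc_f (k := k) f (show (n : ℤ) = n + 1 - 1 by ring) (j + 1)]
  simp only [b_gc, B_gc, gc_gc]
  abel
end
end
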